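/- arXiv:1310.4772 — 5 statements merged into one kernel-verified Lean document; each statement's English description precedes it below -/
import Mathlib

section
/- Let Q = ℝⁿ and L_d : Q × Q → ℝ smooth. Suppose the discrete evolution map F : Q × Q → Q × Q, F(q⁰,q¹) = (q¹,q²), is a smooth map satisfying the discrete Euler-Lagrange equation D₁L_d(q¹,q²) + D₂L_d(q⁰,q¹) = 0 identically (i.e. D₁L_d(F(q⁰,q¹)) + D₂L_d(q⁰,q¹) = 0 for all (q⁰,q¹)). Then F preserves the discrete Lagrangian two-form: F* Ω_{L_d} = Ω_{L_d}, where Ω_{L_d} := -dΘ⁻_{L_d} with Θ⁻_{L_d} = -D₁L_d dq⁰. -/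
noncomputable section

variable {n : ℕ}

local notation "E" => EuclideanSpace ℝ (Fin n)

/-- Partial differential in the first slot. -/
def D1 (L : E × E → ℝ) (q q' : E) : E →L[ℝ] ℝ :=
  fderiv ℝ (fun x => L (x, q')) q

/-- Partial differential in the second slot. -/
def D2 (L : E × E → ℝ) (q q' : E) : E →L[ℝ] ℝ :=
  fderiv ℝ (fun x => L (q, x)) q'

/-- The mixed second derivative `∂²L/∂q⁰∂q¹` as a bilinear form: `B L p a b`
differentiates first in the `q¹`-direction `b`, then in the `q⁰`-direction `a`. -/
def B (L : E × E → ℝ) (p : E × E) : E →L[ℝ] E →L[ℝ] ℝ :=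
  fderiv ℝ (fun q0 => fderiv ℝ (fun q1 => L (q0, q1)) p.2) p.1

/-- The discrete Lagrangian two-form
`Ω_{L_d} = (∂²L_d/∂q⁰_i∂q¹_j) dq⁰_i ∧ dq¹_j`. -/
def Omega (L : E × E → ℝ) (p : E × E) (u v : E × E) : ℝ :=
  B L p u.1 v.2 - B L p v.1 u.2

set_option maxHeartbeats 1600000 in
/-- If `F(q⁰,q¹) = (q¹, f(q⁰,q¹))` satisfies the discrete Euler-Lagrange
equation `D₁L_d(F(q⁰,q¹)) + D₂L_d(q⁰,q¹) = 0` identically, then `F` preserves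
the discrete Lagrangian two-form: `F* Ω_{L_d} = Ω_{L_d}`. -/
theorem discrete_flow_is_symplectic
    (L : E × E → ℝ) (hL : ContDiff ℝ (⊤ : ℕ∞) L)
    (f : E × E → E) (hf : ContDiff ℝ (⊤ : ℕ∞) f)
    (F : E × E → E × E) (hF : ∀ p : E × E, F p = (p.2, f p))
    (hDEL : ∀ p : E × E, D1 L p.2 (f p) + D2 L p.1 p.2 = 0) :
    ∀ (p : E × E) (u v : E × E),
      Omega L (F p) (fderiv ℝ F p u) (fderiv ℝ F p v) = Omega L p u v := by
  classical
  have hFeq : F = fun p => (p.2, f p) := funext hF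
  subst hFeq
  set G : E × E → ((E × E) →L[ℝ] ℝ) := fderiv ℝ L with hG
  have hLd : Differentiable ℝ L := hL.differentiable (by simp)
  have hGc : ContDiff ℝ (⊤ : ℕ∞) G := hL.fderiv_right (by simp)
  have hGd : Differentiable ℝ G := hGc.differentiable (by simp)
  set H : E × E → ((E × E) →L[ℝ] ((E × E) →L[ℝ] ℝ)) := fderiv ℝ G with hH
  have hfd : Differentiable ℝ f := hf.differentiable (by simp)
  -- symmetry of second derivative
  have hSymm : ∀ p (v w : E × E), H p v w = H p w v := by
    intro p v w
    exact second_derivative_symmetric (fun y => (hLd y).hasFDerivAt)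
      ((hGd p).hasFDerivAt) v w
  -- first-slot derivative
  have hD1 : ∀ a b : E, ∀ w : E, D1 L a b w = G (a, b) (w, 0) := by
    intro a b w
    have h1 : HasFDerivAt (fun x : E => L (x, b))
        ((G (a, b)).comp ((ContinuousLinearMap.id ℝ E).prod 0)) a := by
      have := (hLd (a, b)).hasFDerivAt.comp a
        (HasFDerivAt.prodMk (hasFDerivAt_id (𝕜 := ℝ) a) (hasFDerivAt_const b a))
      exact this
    rw [D1, h1.fderiv]
    simp
  have hD2 : ∀ a b : E, ∀ w : E, D2 L a b w = G (a, b) (0, w) := by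
    intro a b w
    have h1 : HasFDerivAt (fun x : E => L (a, x))
        ((G (a, b)).comp (((0 : E →L[ℝ] E)).prod (ContinuousLinearMap.id ℝ E))) b := by
      exact (hLd (a, b)).hasFDerivAt.comp b
        (HasFDerivAt.prodMk (hasFDerivAt_const a b) (hasFDerivAt_id b))
    rw [D2, h1.fderiv]
    simp
  -- B in terms of H
  have hB : ∀ p : E × E, ∀ a b : E, B L p a b = H p (a, 0) (0, b) := by
    intro p a b
    have hinner : ∀ q0 : E, fderiv ℝ (fun q1 => L (q0, q1)) p.2
        = (G (q0, p.2)).comp (((0 : E →L[ℝ] E)).prod (ContinuousLinearMap.id ℝ E)) := by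
      intro q0
      exact ((hLd (q0, p.2)).hasFDerivAt.comp p.2
        (HasFDerivAt.prodMk (hasFDerivAt_const q0 p.2) (hasFDerivAt_id p.2))).fderiv
    have hcomp : HasFDerivAt (fun q0 : E => fderiv ℝ (fun q1 => L (q0, q1)) p.2)
        (((ContinuousLinearMap.compL ℝ E (E × E) ℝ).flip
            (((0 : E →L[ℝ] E)).prod (ContinuousLinearMap.id ℝ E))).comp
          ((H p).comp ((ContinuousLinearMap.id ℝ E).prod 0))) p.1 := by
      have h2 : HasFDerivAt (fun q0 : E => G (q0, p.2))
          ((H p).comp ((ContinuousLinearMap.id ℝ E).prod 0)) p.1 := by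
        have := (hGd p).hasFDerivAt.comp p.1
          (HasFDerivAt.prodMk (hasFDerivAt_id (𝕜 := ℝ) p.1) (hasFDerivAt_const p.2 p.1))
        exact this
      have h3 := (((ContinuousLinearMap.compL ℝ E (E × E) ℝ).flip
          (((0 : E →L[ℝ] E)).prod (ContinuousLinearMap.id ℝ E))).hasFDerivAt).comp p.1 h2
      refine h3.congr_of_eventuallyEq ?_
      filter_upwards with q0
      simp [hinner q0, Function.comp]
    rw [B, hcomp.fderiv]
    simp
  -- derivative of F
  have hdF : ∀ p : E × E, HasFDerivAt (fun p : E × E => (p.2, f p))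
      ((ContinuousLinearMap.snd ℝ E E).prod (fderiv ℝ f p)) p := by
    intro p
    exact HasFDerivAt.prodMk (hasFDerivAt_snd) (hfd p).hasFDerivAt
  -- differentiated discrete Euler-Lagrange equations
  have key : ∀ (p : E × E) (w : E) (u : E × E),
      H ((fun p : E × E => (p.2, f p)) p)
          (((ContinuousLinearMap.snd ℝ E E).prod (fderiv ℝ f p)) u) (w, 0)
        + H p u (0, w) = 0 := by
    intro p w u
    have hΦ : (fun p : E × E => G (p.2, f p) ((w, 0) : E × E) + G p ((0, w) : E × E))
        = fun _ => (0 : ℝ) := by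
      funext q
      have := congrArg (fun (M : E →L[ℝ] ℝ) => M w) (hDEL q)
      simpa [hD1, hD2] using this
    -- derivative of the first term
    have h1 : HasFDerivAt (fun p : E × E => G (p.2, f p) ((w, 0) : E × E))
        ((ContinuousLinearMap.apply ℝ ℝ ((w, 0) : E × E)).comp
          ((H ((fun p : E × E => (p.2, f p)) p)).comp
            ((ContinuousLinearMap.snd ℝ E E).prod (fderiv ℝ f p)))) p := by
      exact (ContinuousLinearMap.apply ℝ ℝ ((w, 0) : E × E)).hasFDerivAt.comp p
        (((hGd _).hasFDerivAt).comp p (hdF p))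
    have h2 : HasFDerivAt (fun p : E × E => G p ((0, w) : E × E))
        ((ContinuousLinearMap.apply ℝ ℝ ((0, w) : E × E)).comp (H p)) p :=
      (ContinuousLinearMap.apply ℝ ℝ ((0, w) : E × E)).hasFDerivAt.comp p
        (hGd p).hasFDerivAt
    have h3 := (h1.fun_add h2)
    rw [hΦ] at h3
    have h4 : (((ContinuousLinearMap.apply ℝ ℝ ((w, 0) : E × E)).comp
          ((H ((fun p : E × E => (p.2, f p)) p)).comp
            ((ContinuousLinearMap.snd ℝ E E).prod (fderiv ℝ f p))))
        + ((ContinuousLinearMap.apply ℝ ℝ ((0, w) : E × E)).comp (H p))) = 0 :=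
      h3.unique (hasFDerivAt_const 0 p)
    have := congrArg (fun (M : (E × E) →L[ℝ] ℝ) => M u) h4
    simpa using this
  intro p u v
  have hfd' : fderiv ℝ (fun p : E × E => (p.2, f p)) p
      = (ContinuousLinearMap.snd ℝ E E).prod (fderiv ℝ f p) := (hdF p).fderiv
  set q : E × E := (p.2, f p) with hq
  set df : (E × E) →L[ℝ] E := fderiv ℝ f p with hdf
  have hU : fderiv ℝ (fun p : E × E => (p.2, f p)) p u = (u.2, df u) := by
    rw [hfd']; rfl
  have hV : fderiv ℝ (fun p : E × E => (p.2, f p)) p v = (v.2, df v) := by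
    rw [hfd']; rfl
  have keyu : H q ((u.2, df u) : E × E) ((v.2, 0) : E × E)
      + H p u ((0, v.2) : E × E) = 0 := by
    have h := key p v.2 u
    simpa using h
  have keyv : H q ((v.2, df v) : E × E) ((u.2, 0) : E × E)
      + H p v ((0, u.2) : E × E) = 0 := by
    have h := key p u.2 v
    simpa using h
  -- linearity decompositions
  have splitu : H q ((u.2, df u) : E × E) ((v.2, 0) : E × E)
      = H q ((u.2, 0) : E × E) ((v.2, 0) : E × E)
        + H q ((0, df u) : E × E) ((v.2, 0) : E × E) := by
    have : ((u.2, df u) : E × E) = ((u.2, 0) : E × E) + ((0, df u) : E × E) := by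
      simp [Prod.ext_iff]
    rw [this, map_add]; rfl
  have splitv : H q ((v.2, df v) : E × E) ((u.2, 0) : E × E)
      = H q ((v.2, 0) : E × E) ((u.2, 0) : E × E)
        + H q ((0, df v) : E × E) ((u.2, 0) : E × E) := by
    have : ((v.2, df v) : E × E) = ((v.2, 0) : E × E) + ((0, df v) : E × E) := by
      simp [Prod.ext_iff]
    rw [this, map_add]; rfl
  have splitpu : H p u ((0, v.2) : E × E)
      = H p ((u.1, 0) : E × E) ((0, v.2) : E × E)
        + H p ((0, u.2) : E × E) ((0, v.2) : E × E) := by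
    have h : u = ((u.1, 0) : E × E) + ((0, u.2) : E × E) := by simp [Prod.ext_iff]
    conv_lhs => rw [h]
    rw [map_add, ContinuousLinearMap.add_apply]
  have splitpv : H p v ((0, u.2) : E × E)
      = H p ((v.1, 0) : E × E) ((0, u.2) : E × E)
        + H p ((0, v.2) : E × E) ((0, u.2) : E × E) := by
    have h : v = ((v.1, 0) : E × E) + ((0, v.2) : E × E) := by simp [Prod.ext_iff]
    conv_lhs => rw [h]
    rw [map_add, ContinuousLinearMap.add_apply]
  rw [Omega, Omega, hU, hV]
  beta_reduce
  simp only [hB]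
  -- main equalities from key + symmetry
  have e1 : H q ((u.2, 0) : E × E) ((0, df v) : E × E)
      = - H p v ((0, u.2) : E × E) - H q ((v.2, 0) : E × E) ((u.2, 0) : E × E) := by
    have hsym : H q ((u.2, 0) : E × E) ((0, df v) : E × E)
        = H q ((0, df v) : E × E) ((u.2, 0) : E × E) := hSymm q _ _
    rw [hsym]
    linarith [keyv, splitv]
  have e2 : H q ((v.2, 0) : E × E) ((0, df u) : E × E)
      = - H p u ((0, v.2) : E × E) - H q ((u.2, 0) : E × E) ((v.2, 0) : E × E) := by
    have hsym : H q ((v.2, 0) : E × E) ((0, df u) : E × E)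
        = H q ((0, df u) : E × E) ((v.2, 0) : E × E) := hSymm q _ _
    rw [hsym]
    linarith [keyu, splitu]
  have symq : H q ((u.2, 0) : E × E) ((v.2, 0) : E × E)
      = H q ((v.2, 0) : E × E) ((u.2, 0) : E × E) := hSymm q _ _
  have symp : H p ((0, u.2) : E × E) ((0, v.2) : E × E)
      = H p ((0, v.2) : E × E) ((0, u.2) : E × E) := hSymm p _ _
  rw [e1, e2]
  linarith [splitpu, splitpv]

end
end

section
/- Let 𝓛_d be a discrete covariant Lagrangian density on a triangulated grid with nodes (j,a), j = 0,...,N, a = 0,...,A, and let 𝓛_a^j := 𝓛_d(Δ_a^j, φ_a^j, φ_a^{j+1}, φ_{a+1}^j). Define L_d(𝛗^j, 𝛗^{j+1}) := Σ_{a=0}^{A-1} 𝓛_a^j on M^{A+1} × M^{A+1}, where 𝛗^j := (φ_0^j,...,φ_A^j). Then the discrete Euler-Lagrange equations D₁L_d(𝛗^j, 𝛗^{j+1}) + D₂L_d(𝛗^{j-1}, 𝛗^j) = 0 for all j = 1,...,N-1 hold if and only if the following hold simultaneously: (i) D₁𝓛_a^j + D₂𝓛_a^{j-1} + D₃𝓛_{a-1}^j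 = 0 for j = 1,...,N-1 and a = 1,...,A-1 (discrete covariant Euler-Lagrange equations); (ii) D₁𝓛_0^j + D₂𝓛_0^{j-1} = 0 for j = 1,...,N-1; (iii) D₃𝓛_{A-1}^j = 0 for j = 1,...,N-1 (discrete zero-traction boundary conditions). -/
noncomputable section

variable {V : Type*} [NormedAddCommGroup V] [NormedSpace ℝ V]

/-- Partial differential of `𝓛 : V³ → ℝ` in its first slot. -/
def T1 (L : V × V × V → ℝ) (p : V × V × V) : V →L[ℝ] ℝ :=
  fderiv ℝ (fun x => L (x, p.2.1, p.2.2)) p.1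

/-- Partial differential of `𝓛 : V³ → ℝ` in its second slot. -/
def T2 (L : V × V × V → ℝ) (p : V × V × V) : V →L[ℝ] ℝ :=
  fderiv ℝ (fun x => L (p.1, x, p.2.2)) p.2.1

/-- Partial differential of `𝓛 : V³ → ℝ` in its third slot. -/
def T3 (L : V × V × V → ℝ) (p : V × V × V) : V →L[ℝ] ℝ :=
  fderiv ℝ (fun x => L (p.1, p.2.1, x)) p.2.2

/-- Partial differential of `L : E × F → ℝ` in the first factor. -/
def pD1 {E F : Type*} [NormedAddCommGroup E] [NormedSpace ℝ E]
    [NormedAddCommGroup F] [NormedSpace ℝ F]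
    (L : E × F → ℝ) (p : E × F) : E →L[ℝ] ℝ :=
  fderiv ℝ (fun x => L (x, p.2)) p.1

/-- Partial differential of `L : E × F → ℝ` in the second factor. -/
def pD2 {E F : Type*} [NormedAddCommGroup E] [NormedSpace ℝ E]
    [NormedAddCommGroup F] [NormedSpace ℝ F]
    (L : E × F → ℝ) (p : E × F) : F →L[ℝ] ℝ :=
  fderiv ℝ (fun y => L (p.1, y)) p.2

lemma T1_eq (L : V × V × V → ℝ) (hL : Differentiable ℝ L) (p : V × V × V) (u : V) :
    T1 L p u = fderiv ℝ L p (u, 0, 0) := by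
  obtain ⟨p1, p2, p3⟩ := p
  have h : HasFDerivAt (fun x : V => L (x, p2, p3))
      ((fderiv ℝ L (p1, p2, p3)).comp
        ((ContinuousLinearMap.id ℝ V).prod 0)) p1 :=
    (hL (p1, p2, p3)).hasFDerivAt.comp p1
      (HasFDerivAt.prodMk (hasFDerivAt_id p1) (hasFDerivAt_const (p2, p3) p1))
  simp [T1, h.fderiv]
  rfl

lemma T2_eq (L : V × V × V → ℝ) (hL : Differentiable ℝ L) (p : V × V × V) (u : V) :
    T2 L p u = fderiv ℝ L p (0, u, 0) := by
  obtain ⟨p1, p2, p3⟩ := p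
  have h : HasFDerivAt (fun x : V => L (p1, x, p3))
      ((fderiv ℝ L (p1, p2, p3)).comp
        ((0 : V →L[ℝ] V).prod ((ContinuousLinearMap.id ℝ V).prod 0))) p2 :=
    (hL (p1, p2, p3)).hasFDerivAt.comp p2
      (HasFDerivAt.prodMk (hasFDerivAt_const p1 p2) (HasFDerivAt.prodMk (hasFDerivAt_id p2) (hasFDerivAt_const p3 p2)))
  simp [T2, h.fderiv]

lemma T3_eq (L : V × V × V → ℝ) (hL : Differentiable ℝ L) (p : V × V × V) (u : V) :
    T3 L p u = fderiv ℝ L p (0, 0, u) := by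
  obtain ⟨p1, p2, p3⟩ := p
  have h : HasFDerivAt (fun x : V => L (p1, p2, x))
      ((fderiv ℝ L (p1, p2, p3)).comp
        ((0 : V →L[ℝ] V).prod ((0 : V →L[ℝ] V).prod (ContinuousLinearMap.id ℝ V)))) p3 :=
    (hL (p1, p2, p3)).hasFDerivAt.comp p3
      (HasFDerivAt.prodMk (hasFDerivAt_const p1 p3) (HasFDerivAt.prodMk (hasFDerivAt_const p2 p3) (hasFDerivAt_id p3)))
  simp [T3, h.fderiv]

lemma fderiv_triple_apply (L : V × V × V → ℝ) (hL : Differentiable ℝ L)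
    (p : V × V × V) (u v w : V) :
    fderiv ℝ L p (u, v, w) = T1 L p u + T2 L p v + T3 L p w := by
  rw [T1_eq L hL, T2_eq L hL, T3_eq L hL, ← map_add, ← map_add]
  congr 1
  simp [Prod.ext_iff]

/-- The discrete Euler-Lagrange equations for the time-evolution discrete
Lagrangian `L_d(𝛗^j, 𝛗^{j+1}) = Σ_{a=0}^{A-1} 𝓛_a^j` are equivalent to the
discrete covariant Euler-Lagrange equations together with the discrete
zero-traction spatial boundary conditions. -/
theorem time_evolution_DEL_iff_DCEL_and_zero_traction
    (N A : ℕ) (hN : 2 ≤ N) (hA : 1 ≤ A)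
    (Lag : ℕ → ℕ → V × V × V → ℝ) (hLag : ∀ j a, ContDiff ℝ (⊤ : ℕ∞) (Lag j a))
    (φ : ℕ → ℕ → V) :
    -- first jet of the field on the triangle `Δ_a^j`
    let tri : ℕ → ℕ → V × V × V := fun j a => (φ j a, φ (j + 1) a, φ j (a + 1))
    -- time-evolution discrete Lagrangian on `M^{A+1} × M^{A+1}`
    let Ld : ℕ → ((Fin (A + 1) → V) × (Fin (A + 1) → V)) → ℝ := fun j p =>
      ∑ a : Fin A, Lag j a.1 (p.1 a.castSucc, p.2 a.castSucc, p.1 a.succ)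
    -- the vector of nodal values at time `j`
    let Φv : ℕ → Fin (A + 1) → V := fun j a => φ j a.1
    ((∀ j, 1 ≤ j → j ≤ N - 1 →
        pD1 (Ld j) (Φv j, Φv (j + 1)) + pD2 (Ld (j - 1)) (Φv (j - 1), Φv j) = 0) ↔
      ((∀ j a, 1 ≤ j → j ≤ N - 1 → 1 ≤ a → a ≤ A - 1 →
          T1 (Lag j a) (tri j a) + T2 (Lag (j - 1) a) (tri (j - 1) a) +
            T3 (Lag j (a - 1)) (tri j (a - 1)) = 0) ∧
       (∀ j, 1 ≤ j → j ≤ N - 1 →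
          T1 (Lag j 0) (tri j 0) + T2 (Lag (j - 1) 0) (tri (j - 1) 0) = 0) ∧
       (∀ j, 1 ≤ j → j ≤ N - 1 →
          T3 (Lag j (A - 1)) (tri j (A - 1)) = 0))) := by
  intro tri Ld Φv
  classical
  have hdiff : ∀ j a, Differentiable ℝ (Lag j a) := fun j a => (hLag j a).differentiable (by simp)
  have key : ∀ j : ℕ, 1 ≤ j →
      (pD1 (Ld j) (Φv j, Φv (j + 1)) + pD2 (Ld (j - 1)) (Φv (j - 1), Φv j) = 0 ↔
        ((∀ a, 1 ≤ a → a ≤ A - 1 →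
            T1 (Lag j a) (tri j a) + T2 (Lag (j - 1) a) (tri (j - 1) a) +
              T3 (Lag j (a - 1)) (tri j (a - 1)) = 0) ∧
         (T1 (Lag j 0) (tri j 0) + T2 (Lag (j - 1) 0) (tri (j - 1) 0) = 0) ∧
         (T3 (Lag j (A - 1)) (tri j (A - 1)) = 0))) := by
    intro j hj
    have hj1 : j - 1 + 1 = j := Nat.succ_pred_eq_of_pos hj
    -- derivative of the first slot
    have hD1 : ∀ v : Fin (A + 1) → V,
        pD1 (Ld j) (Φv j, Φv (j + 1)) v =
          ∑ a : Fin A, (T1 (Lag j a.1) (tri j a.1) (v a.castSucc)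
            + T3 (Lag j a.1) (tri j a.1) (v a.succ)) := by
      have H : HasFDerivAt (fun x : Fin (A + 1) → V => Ld j (x, Φv (j + 1)))
          (∑ a : Fin A, (fderiv ℝ (Lag j a.1) (tri j a.1)).comp
            ((ContinuousLinearMap.proj a.castSucc).prod
              (((0 : (Fin (A + 1) → V) →L[ℝ] V)).prod
                (ContinuousLinearMap.proj a.succ)))) (Φv j) := by
        have : HasFDerivAt (fun x : Fin (A + 1) → V =>
            ∑ a : Fin A, Lag j a.1 (x a.castSucc, Φv (j + 1) a.castSucc, x a.succ))
            (∑ a : Fin A, (fderiv ℝ (Lag j a.1) (tri j a.1)).comp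
              ((ContinuousLinearMap.proj a.castSucc).prod
                (((0 : (Fin (A + 1) → V) →L[ℝ] V)).prod
                  (ContinuousLinearMap.proj a.succ)))) (Φv j) := by
          apply HasFDerivAt.fun_sum
          intro a _
          have hg : HasFDerivAt (fun x : Fin (A + 1) → V =>
              (x a.castSucc, (Φv (j + 1) a.castSucc, x a.succ)))
              ((ContinuousLinearMap.proj a.castSucc).prod
                (((0 : (Fin (A + 1) → V) →L[ℝ] V)).prod
                  (ContinuousLinearMap.proj a.succ))) (Φv j) := by
            have h1 : HasFDerivAt (fun x : Fin (A + 1) → V => x a.castSucc)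
                (ContinuousLinearMap.proj a.castSucc : (Fin (A + 1) → V) →L[ℝ] V) (Φv j) :=
              (ContinuousLinearMap.proj a.castSucc : (Fin (A + 1) → V) →L[ℝ] V).hasFDerivAt
            have h2 : HasFDerivAt (fun x : Fin (A + 1) → V => x a.succ)
                (ContinuousLinearMap.proj a.succ : (Fin (A + 1) → V) →L[ℝ] V) (Φv j) :=
              (ContinuousLinearMap.proj a.succ : (Fin (A + 1) → V) →L[ℝ] V).hasFDerivAt
            exact HasFDerivAt.prodMk h1 (HasFDerivAt.prodMk (hasFDerivAt_const (Φv (j + 1) a.castSucc) (Φv j)) h2)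
          exact ((hdiff j a.1 (tri j a.1)).hasFDerivAt.comp (Φv j) hg)
        exact this
      intro v
      have h0 : pD1 (Ld j) (Φv j, Φv (j + 1)) =
          ∑ a : Fin A, (fderiv ℝ (Lag j a.1) (tri j a.1)).comp
            ((ContinuousLinearMap.proj a.castSucc).prod
              (((0 : (Fin (A + 1) → V) →L[ℝ] V)).prod
                (ContinuousLinearMap.proj a.succ))) := H.fderiv
      rw [h0, ContinuousLinearMap.sum_apply]
      refine Finset.sum_congr rfl fun a _ => ?_
      rw [ContinuousLinearMap.comp_apply, ContinuousLinearMap.prod_apply,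
        ContinuousLinearMap.prod_apply]
      have := fderiv_triple_apply (Lag j a.1) (hdiff j a.1) (tri j a.1)
        (v a.castSucc) 0 (v a.succ)
      simpa using this
    -- derivative of the second slot
    have htri : ∀ a : ℕ, tri (j - 1) a = (φ (j - 1) a, φ j a, φ (j - 1) (a + 1)) := by
      intro a; simp [tri, hj1]
    have hD2 : ∀ v : Fin (A + 1) → V,
        pD2 (Ld (j - 1)) (Φv (j - 1), Φv j) v =
          ∑ a : Fin A, T2 (Lag (j - 1) a.1) (tri (j - 1) a.1) (v a.castSucc) := by
      have H : HasFDerivAt (fun y : Fin (A + 1) → V => Ld (j - 1) (Φv (j - 1), y))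
          (∑ a : Fin A, (fderiv ℝ (Lag (j - 1) a.1) (tri (j - 1) a.1)).comp
            (((0 : (Fin (A + 1) → V) →L[ℝ] V)).prod
              ((ContinuousLinearMap.proj a.castSucc).prod
                (0 : (Fin (A + 1) → V) →L[ℝ] V)))) (Φv j) := by
        have : HasFDerivAt (fun y : Fin (A + 1) → V =>
            ∑ a : Fin A, Lag (j - 1) a.1 (Φv (j - 1) a.castSucc, y a.castSucc, Φv (j - 1) a.succ))
            (∑ a : Fin A, (fderiv ℝ (Lag (j - 1) a.1) (tri (j - 1) a.1)).comp
              (((0 : (Fin (A + 1) → V) →L[ℝ] V)).prod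
                ((ContinuousLinearMap.proj a.castSucc).prod
                  (0 : (Fin (A + 1) → V) →L[ℝ] V)))) (Φv j) := by
          apply HasFDerivAt.fun_sum
          intro a _
          have hg : HasFDerivAt (fun y : Fin (A + 1) → V =>
              (Φv (j - 1) a.castSucc, (y a.castSucc, Φv (j - 1) a.succ)))
              (((0 : (Fin (A + 1) → V) →L[ℝ] V)).prod
                ((ContinuousLinearMap.proj a.castSucc).prod
                  (0 : (Fin (A + 1) → V) →L[ℝ] V))) (Φv j) := by
            have h1 : HasFDerivAt (fun y : Fin (A + 1) → V => y a.castSucc)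
                (ContinuousLinearMap.proj a.castSucc : (Fin (A + 1) → V) →L[ℝ] V) (Φv j) :=
              (ContinuousLinearMap.proj a.castSucc : (Fin (A + 1) → V) →L[ℝ] V).hasFDerivAt
            exact HasFDerivAt.prodMk (hasFDerivAt_const (Φv (j - 1) a.castSucc) (Φv j))
              (HasFDerivAt.prodMk h1 (hasFDerivAt_const (Φv (j - 1) a.succ) (Φv j)))
          have hpt : tri (j - 1) a.1 =
              (Φv (j - 1) a.castSucc, (Φv j a.castSucc, Φv (j - 1) a.succ)) := htri a.1
          have hout : HasFDerivAt (Lag (j - 1) a.1)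
              (fderiv ℝ (Lag (j - 1) a.1) (tri (j - 1) a.1))
              (Φv (j - 1) a.castSucc, (Φv j a.castSucc, Φv (j - 1) a.succ)) := by
            rw [← hpt]
            exact (hdiff (j - 1) a.1 (tri (j - 1) a.1)).hasFDerivAt
          exact hout.comp (Φv j) hg
        exact this
      intro v
      have h0 : pD2 (Ld (j - 1)) (Φv (j - 1), Φv j) =
          ∑ a : Fin A, (fderiv ℝ (Lag (j - 1) a.1) (tri (j - 1) a.1)).comp
            (((0 : (Fin (A + 1) → V) →L[ℝ] V)).prod
              ((ContinuousLinearMap.proj a.castSucc).prod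
                (0 : (Fin (A + 1) → V) →L[ℝ] V))) := H.fderiv
      rw [h0, ContinuousLinearMap.sum_apply]
      refine Finset.sum_congr rfl fun a _ => ?_
      rw [ContinuousLinearMap.comp_apply, ContinuousLinearMap.prod_apply,
        ContinuousLinearMap.prod_apply]
      have := fderiv_triple_apply (Lag (j - 1) a.1) (hdiff (j - 1) a.1) (tri (j - 1) a.1)
        0 (v a.castSucc) 0
      simpa using this
    set G := pD1 (Ld j) (Φv j, Φv (j + 1)) + pD2 (Ld (j - 1)) (Φv (j - 1), Φv j) with hG
    have hGv : ∀ v : Fin (A + 1) → V, G v =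
        (∑ a : Fin A, ((T1 (Lag j a.1) (tri j a.1) (v a.castSucc)
            + T2 (Lag (j - 1) a.1) (tri (j - 1) a.1) (v a.castSucc))))
        + ∑ a : Fin A, T3 (Lag j a.1) (tri j a.1) (v a.succ) := by
      intro v
      rw [hG, ContinuousLinearMap.add_apply, hD1 v, hD2 v,
        Finset.sum_add_distrib, Finset.sum_add_distrib]
      ring
    -- single evaluations
    have hsingle : ∀ (b : Fin (A + 1)) (u : V), G (Pi.single b u) =
        (∑ a : Fin A, if a.castSucc = b then
            (T1 (Lag j a.1) (tri j a.1) u + T2 (Lag (j - 1) a.1) (tri (j - 1) a.1) u) else 0)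
        + ∑ a : Fin A, if a.succ = b then T3 (Lag j a.1) (tri j a.1) u else 0 := by
      intro b u
      rw [hGv]
      congr 1
      · refine Finset.sum_congr rfl fun a _ => ?_
        by_cases h : a.castSucc = b <;> simp [Pi.single_apply, h]
      · refine Finset.sum_congr rfl fun a _ => ?_
        by_cases h : a.succ = b <;> simp [Pi.single_apply, h]
    have hc0 : ∀ u : V, G (Pi.single (0 : Fin (A + 1)) u) =
        T1 (Lag j 0) (tri j 0) u + T2 (Lag (j - 1) 0) (tri (j - 1) 0) u := by
      intro u
      rw [hsingle]
      have e1 : (∑ a : Fin A, if a.castSucc = (0 : Fin (A + 1)) then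
          (T1 (Lag j a.1) (tri j a.1) u + T2 (Lag (j - 1) a.1) (tri (j - 1) a.1) u) else 0)
          = T1 (Lag j ((⟨0, hA⟩ : Fin A) : ℕ)) (tri j ((⟨0, hA⟩ : Fin A) : ℕ)) u
            + T2 (Lag (j - 1) ((⟨0, hA⟩ : Fin A) : ℕ)) (tri (j - 1) ((⟨0, hA⟩ : Fin A) : ℕ)) u := by
        rw [Finset.sum_eq_single (⟨0, hA⟩ : Fin A)]
        · rw [if_pos]; exact Fin.ext (by simp)
        · intro a _ hne
          rw [if_neg]
          intro hc
          exact hne (Fin.ext (by simpa using congrArg Fin.val hc))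
        · intro h; exact absurd (Finset.mem_univ _) h
      have e2 : (∑ a : Fin A, if a.succ = (0 : Fin (A + 1)) then
          T3 (Lag j a.1) (tri j a.1) u else 0) = 0 := by
        apply Finset.sum_eq_zero
        intro a _
        rw [if_neg (Fin.succ_ne_zero a)]
      rw [e1, e2, add_zero]
    have hcA : ∀ u : V, G (Pi.single (Fin.last A) u) =
        T3 (Lag j (A - 1)) (tri j (A - 1)) u := by
      intro u
      rw [hsingle]
      have e1 : (∑ a : Fin A, if a.castSucc = Fin.last A then
          (T1 (Lag j a.1) (tri j a.1) u + T2 (Lag (j - 1) a.1) (tri (j - 1) a.1) u) else 0)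
          = 0 := by
        apply Finset.sum_eq_zero
        intro a _
        rw [if_neg]
        intro hc
        exact absurd (congrArg Fin.val hc) (by simpa using a.2.ne)
      have e2 : (∑ a : Fin A, if a.succ = Fin.last A then
          T3 (Lag j a.1) (tri j a.1) u else 0)
          = T3 (Lag j ((⟨A - 1, by omega⟩ : Fin A) : ℕ)) (tri j ((⟨A - 1, by omega⟩ : Fin A) : ℕ)) u := by
        rw [Finset.sum_eq_single (⟨A - 1, by omega⟩ : Fin A)]
        · rw [if_pos]; exact Fin.ext (show A - 1 + 1 = A by omega)
        · intro a _ hne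
          rw [if_neg]
          intro hc
          have : a.1 + 1 = A := by simpa using congrArg Fin.val hc
          exact hne (Fin.ext (show a.1 = A - 1 by omega))
        · intro h; exact absurd (Finset.mem_univ _) h
      rw [e1, e2, zero_add]
    have hcmid : ∀ (b : Fin (A + 1)) (u : V), 1 ≤ b.1 → b.1 ≤ A - 1 →
        G (Pi.single b u) =
          T1 (Lag j b.1) (tri j b.1) u + T2 (Lag (j - 1) b.1) (tri (j - 1) b.1) u
            + T3 (Lag j (b.1 - 1)) (tri j (b.1 - 1)) u := by
      intro b u hb1 hb2
      rw [hsingle]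
      have hbA : b.1 < A := by omega
      have e1 : (∑ a : Fin A, if a.castSucc = b then
          (T1 (Lag j a.1) (tri j a.1) u + T2 (Lag (j - 1) a.1) (tri (j - 1) a.1) u) else 0)
          = T1 (Lag j ((⟨b.1, hbA⟩ : Fin A) : ℕ)) (tri j ((⟨b.1, hbA⟩ : Fin A) : ℕ)) u
            + T2 (Lag (j - 1) ((⟨b.1, hbA⟩ : Fin A) : ℕ)) (tri (j - 1) ((⟨b.1, hbA⟩ : Fin A) : ℕ)) u := by
        rw [Finset.sum_eq_single (⟨b.1, hbA⟩ : Fin A)]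
        · rw [if_pos]; exact Fin.ext rfl
        · intro a _ hne
          rw [if_neg]
          intro hc
          exact hne (Fin.ext (by simpa using congrArg Fin.val hc))
        · intro h; exact absurd (Finset.mem_univ _) h
      have e2 : (∑ a : Fin A, if a.succ = b then
          T3 (Lag j a.1) (tri j a.1) u else 0)
          = T3 (Lag j ((⟨b.1 - 1, by omega⟩ : Fin A) : ℕ)) (tri j ((⟨b.1 - 1, by omega⟩ : Fin A) : ℕ)) u := by
        rw [Finset.sum_eq_single (⟨b.1 - 1, by omega⟩ : Fin A)]
        · rw [if_pos]; exact Fin.ext (show b.1 - 1 + 1 = b.1 by omega)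
        · intro a _ hne
          rw [if_neg]
          intro hc
          have : a.1 + 1 = b.1 := by simpa using congrArg Fin.val hc
          exact hne (Fin.ext (show a.1 = b.1 - 1 by omega))
        · intro h; exact absurd (Finset.mem_univ _) h
      rw [e1, e2]
    have hzero_iff : G = 0 ↔ ∀ (b : Fin (A + 1)) (u : V), G (Pi.single b u) = 0 := by
      constructor
      · intro h b u; rw [h]; rfl
      · intro h
        ext v
        have : G v = ∑ b : Fin (A + 1), G (Pi.single b (v b)) := by
          rw [← map_sum, Finset.univ_sum_single]
        rw [this]
        simp [h]
    rw [hzero_iff]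
    constructor
    · intro h
      refine ⟨?_, ?_, ?_⟩
      · intro a ha1 ha2
        ext u
        have := hcmid ⟨a, by omega⟩ u ha1 ha2
        rw [h ⟨a, by omega⟩ u] at this
        simpa using this.symm
      · ext u
        have := hc0 u
        rw [h 0 u] at this
        simpa using this.symm
      · ext u
        have := hcA u
        rw [h (Fin.last A) u] at this
        simpa using this.symm
    · rintro ⟨h1, h2, h3⟩ b u
      rcases Nat.lt_or_ge b.1 1 with hb | hb
      · have hb0 : b = 0 := Fin.ext (by rw [Fin.val_zero]; omega)
        rw [hb0, hc0 u]
        have := congrFun (congrArg DFunLike.coe h2) u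
        simpa using this
      · rcases Nat.lt_or_ge b.1 A with hbA | hbA
        · rw [hcmid b u hb (by omega)]
          have := congrFun (congrArg DFunLike.coe (h1 b.1 hb (by omega))) u
          simpa using this
        · have hbl : b = Fin.last A := by
            have hub := b.2
            exact Fin.ext (by simp [Fin.val_last]; omega)
          rw [hbl, hcA u]
          have := congrFun (congrArg DFunLike.coe h3) u
          simpa using this
  constructor
  · intro h
    exact ⟨fun j a hj hjN ha haA => ((key j hj).mp (h j hj hjN)).1 a ha haA,
      fun j hj hjN => ((key j hj).mp (h j hj hjN)).2.1,
      fun j hj hjN => ((key j hj).mp (h j hj hjN)).2.2⟩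
  · rintro ⟨h1, h2, h3⟩ j hj hjN
    exact (key j hj).mpr ⟨fun a ha haA => h1 j a hj hjN ha haA, h2 j hj hjN, h3 j hj hjN⟩


end
end

section
/- Suppose the smooth discrete Lagrangian density 𝓛_d on the triangulated grid is invariant under the diagonal action of a Lie group G on M, and the discrete field φ_d satisfies the discrete covariant Euler-Lagrange equations D₁𝓛_a^j + D₂𝓛_a^{j-1} + D₃𝓛_{a-1}^j = 0 for all j = 1,...,N-1, a = 1,...,A-1. Then for all 0 ≤ B < C ≤ A-1 and 0 ≤ K < L ≤ N-1 the global discrete Noether quantity vanishes: 𝒥_{B,C}^{K,L}(φ_d) = Σ_{j=K+1}^{L} (J¹(j¹φ_d(Δ_B^j)) + J²(j¹φ_d(Δ_B^{j-1})) + J³(j¹φ_d(Δ_C^j))) + Σ_{a=B+1}^{C} (J¹(j¹φ_d(Δ_a^K)) + J²(j¹φ_d(Δ_a^L)) + J³(j¹φ_d(Δ_{a-1}^K))) + J¹(j¹φ_d(Δ_B^K)) + J²(j¹φ_d(Δ_B^L)) + J³(j¹φ_d(Δ_C^K)) = 0 in 𝔤*. -/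
noncomputable section

variable {V : Type*} [NormedAddCommGroup V] [NormedSpace ℝ V] {𝔤 : Type*}

/-- The total differential of a smooth `L : V³ → ℝ` evaluated on a triple of
vectors is the sum of the three partial differentials. -/
lemma fderiv_triple (L : V × V × V → ℝ) (hL : ContDiff ℝ (⊤ : ℕ∞) L) (p : V × V × V) (v1 v2 v3 : V) :
    fderiv ℝ L p (v1, v2, v3) = T1 L p v1 + T2 L p v2 + T3 L p v3 := by
  have hF : HasFDerivAt L (fderiv ℝ L p) p :=
    (hL.differentiable (by simp)).differentiableAt.hasFDerivAt
  have h1 : HasFDerivAt (fun x : V => L (x, p.2.1, p.2.2))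
      ((fderiv ℝ L p).comp (ContinuousLinearMap.inl ℝ V (V × V))) p.1 := by
    have := hF.comp p.1 (hasFDerivAt_prodMk_left (𝕜 := ℝ) p.1 p.2)
    exact this
  have h2 : HasFDerivAt (fun x : V => L (p.1, x, p.2.2))
      ((fderiv ℝ L p).comp ((ContinuousLinearMap.inr ℝ V (V × V)).comp
        (ContinuousLinearMap.inl ℝ V V))) p.2.1 := by
    have hg : HasFDerivAt (fun x : V => (p.1, (x, p.2.2)))
        ((ContinuousLinearMap.inr ℝ V (V × V)).comp (ContinuousLinearMap.inl ℝ V V)) p.2.1 := by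
      have := (hasFDerivAt_prodMk_right (𝕜 := ℝ) p.1 (p.2.1, p.2.2)).comp p.2.1
        (hasFDerivAt_prodMk_left (𝕜 := ℝ) p.2.1 p.2.2)
      exact this
    have := hF.comp p.2.1 hg
    exact this
  have h3 : HasFDerivAt (fun x : V => L (p.1, p.2.1, x))
      ((fderiv ℝ L p).comp ((ContinuousLinearMap.inr ℝ V (V × V)).comp
        (ContinuousLinearMap.inr ℝ V V))) p.2.2 := by
    have hg : HasFDerivAt (fun x : V => (p.1, (p.2.1, x)))
        ((ContinuousLinearMap.inr ℝ V (V × V)).comp (ContinuousLinearMap.inr ℝ V V)) p.2.2 := by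
      have := (hasFDerivAt_prodMk_right (𝕜 := ℝ) p.1 (p.2.1, p.2.2)).comp p.2.2
        (hasFDerivAt_prodMk_right (𝕜 := ℝ) p.2.1 p.2.2)
      exact this
    have := hF.comp p.2.2 hg
    exact this
  have e1 : T1 L p v1 = fderiv ℝ L p (v1, 0, 0) := by
    rw [T1, h1.fderiv]; rfl
  have e2 : T2 L p v2 = fderiv ℝ L p (0, v2, 0) := by
    rw [T2, h2.fderiv]; rfl
  have e3 : T3 L p v3 = fderiv ℝ L p (0, 0, v3) := by
    rw [T3, h3.fderiv]; rfl
  rw [e1, e2, e3, ← map_add, ← map_add]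
  congr 1
  simp [Prod.ext_iff]

/-- Pointwise (per-triangle) discrete Noether identity coming from the
invariance of the Lagrangian density. -/
lemma noether_pointwise (Lg : V × V × V → ℝ) (h : ContDiff ℝ (⊤ : ℕ∞) Lg)
    (Φ : ℝ → 𝔤 → V → V) (ξM : 𝔤 → V → V)
    (hΦ0 : ∀ (ξ : 𝔤) (q : V), Φ 0 ξ q = q)
    (hgen : ∀ (ξ : 𝔤) (q : V), HasDerivAt (fun t => Φ t ξ q) (ξM ξ q) 0)
    (hinv : ∀ (t : ℝ) (ξ : 𝔤) (p1 p2 p3 : V),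
      Lg (Φ t ξ p1, Φ t ξ p2, Φ t ξ p3) = Lg (p1, p2, p3))
    (ξ : 𝔤) (p1 p2 p3 : V) :
    T1 Lg (p1, p2, p3) (ξM ξ p1) + T2 Lg (p1, p2, p3) (ξM ξ p2)
      + T3 Lg (p1, p2, p3) (ξM ξ p3) = 0 := by
  have hc : HasDerivAt (fun t => ((Φ t ξ p1, Φ t ξ p2, Φ t ξ p3) : V × V × V))
      (ξM ξ p1, ξM ξ p2, ξM ξ p3) 0 :=
    (hgen ξ p1).prodMk ((hgen ξ p2).prodMk (hgen ξ p3))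
  have hF : HasFDerivAt Lg (fderiv ℝ Lg (p1, p2, p3)) (p1, p2, p3) :=
    (h.differentiable (by simp)).differentiableAt.hasFDerivAt
  have hF' : HasFDerivAt Lg (fderiv ℝ Lg (p1, p2, p3)) (Φ 0 ξ p1, Φ 0 ξ p2, Φ 0 ξ p3) := by
    rw [hΦ0, hΦ0, hΦ0]; exact hF
  have hcomp : HasDerivAt (fun t => Lg (Φ t ξ p1, Φ t ξ p2, Φ t ξ p3))
      (fderiv ℝ Lg (p1, p2, p3) (ξM ξ p1, ξM ξ p2, ξM ξ p3)) 0 :=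
    hF'.comp_hasDerivAt 0 hc
  have hconst : (fun t => Lg (Φ t ξ p1, Φ t ξ p2, Φ t ξ p3)) = fun _ => Lg (p1, p2, p3) := by
    funext t; exact hinv t ξ p1 p2 p3
  rw [hconst] at hcomp
  have := (hasDerivAt_const (0:ℝ) (Lg (p1, p2, p3))).unique hcomp
  rw [← fderiv_triple Lg h (p1, p2, p3), ← this]

open Finset in
lemma sum_bot' {M : Type*} [AddCommMonoid M] (f : ℕ → M) {a b : ℕ} (h : a ≤ b) :
    ∑ i ∈ Icc a b, f i = f a + ∑ i ∈ Icc (a+1) b, f i := by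
  rw [Finset.Icc_eq_cons_Ioc h, Finset.sum_cons, Finset.Icc_add_one_left_eq_Ioc]

open Finset in
lemma sum_shift' {M : Type*} [AddCommMonoid M] (f : ℕ → M) (a b : ℕ) :
    ∑ i ∈ Icc a b, f (i+1) = ∑ i ∈ Icc (a+1) (b+1), f i := by
  apply Finset.sum_nbij' (fun i => i+1) (fun i => i-1) <;> intros <;>
    simp_all [Finset.mem_Icc] <;> omega

open Finset in
lemma sum_pred' {M : Type*} [AddCommMonoid M] (f : ℕ → M) (a b : ℕ) :
    ∑ i ∈ Icc (a+1) (b+1), f (i-1) = ∑ i ∈ Icc a b, f i := by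
  rw [← sum_shift' (fun i => f (i-1))]
  simp

open Finset in
/-- The purely combinatorial part of the global discrete Noether theorem:
the per-triangle identity plus the discrete Euler–Lagrange equations force the
boundary (Noether) sum over any rectangle to vanish. -/
lemma combinatorial (F1 F2 F3 : ℕ → ℕ → ℝ) (B C K L : ℕ) (hBC : B < C) (hKL : K < L)
    (hP : ∀ j a, F1 j a + F2 j a + F3 j a = 0)
    (hE : ∀ j a, K+1 ≤ j → j ≤ L → B+1 ≤ a → a ≤ C →
      F1 j a + F2 (j-1) a + F3 j (a-1) = 0) :
    (∑ j ∈ Icc (K+1) L, (F1 j B + F2 (j-1) B + F3 j C)) +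
    (∑ a ∈ Icc (B+1) C, (F1 K a + F2 L a + F3 K (a-1))) +
    (F1 K B + F2 L B + F3 K C) = 0 := by
  obtain ⟨L', rfl⟩ : ∃ L', L = L'+1 := ⟨L-1, by omega⟩
  obtain ⟨C', rfl⟩ : ∃ C', C = C'+1 := ⟨C-1, by omega⟩
  have hKL' : K ≤ L' := by omega
  have hBC' : B ≤ C' := by omega
  set a1 := ∑ a ∈ Icc B (C'+1), F1 K a with ha1
  set b1 := ∑ j ∈ Icc (K+1) (L'+1), F1 j B with hb1
  set c1 := ∑ j ∈ Icc (K+1) (L'+1), ∑ a ∈ Icc (B+1) (C'+1), F1 j a with hc1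
  set a2 := ∑ a ∈ Icc B (C'+1), F2 (L'+1) a with ha2
  set b2 := ∑ j ∈ Icc (K+1) (L'+1), F2 (j-1) B with hb2
  set c2 := ∑ j ∈ Icc (K+1) (L'+1), ∑ a ∈ Icc (B+1) (C'+1), F2 (j-1) a with hc2
  set a3 := ∑ a ∈ Icc B (C'+1), F3 K a with ha3
  set b3 := ∑ j ∈ Icc (K+1) (L'+1), F3 j (C'+1) with hb3
  set c3 := ∑ j ∈ Icc (K+1) (L'+1), ∑ a ∈ Icc (B+1) (C'+1), F3 j (a-1) with hc3
  set p1 := ∑ a ∈ Icc (B+1) (C'+1), F1 K a with hp1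
  set p2 := ∑ a ∈ Icc (B+1) (C'+1), F2 (L'+1) a with hp2
  set p3 := ∑ a ∈ Icc (B+1) (C'+1), F3 K (a-1) with hp3
  have e1 : a1 = F1 K B + p1 := sum_bot' (fun a => F1 K a) (by omega)
  have e2 : a2 = F2 (L'+1) B + p2 := sum_bot' (fun a => F2 (L'+1) a) (by omega)
  have e3 : a3 = p3 + F3 K (C'+1) := by
    rw [ha3, hp3, sum_pred' (fun a => F3 K a) B C',
      Finset.sum_Icc_succ_top (by omega) (fun a => F3 K a)]
  have g1 : (∑ j ∈ Icc (K+1) (L'+1), (F1 j B + F2 (j-1) B + F3 j (C'+1)))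
      = b1 + b2 + b3 := by
    rw [hb1, hb2, hb3, ← Finset.sum_add_distrib, ← Finset.sum_add_distrib]
  have g2 : (∑ a ∈ Icc (B+1) (C'+1), (F1 K a + F2 (L'+1) a + F3 K (a-1)))
      = p1 + p2 + p3 := by
    rw [hp1, hp2, hp3, ← Finset.sum_add_distrib, ← Finset.sum_add_distrib]
  have A1 : ∑ j ∈ Icc K (L'+1), ∑ a ∈ Icc B (C'+1), (F1 j a + F2 j a + F3 j a) = 0 :=
    Finset.sum_eq_zero fun j _ => Finset.sum_eq_zero fun a _ => hP j a
  have A2 : ∑ j ∈ Icc (K+1) (L'+1), ∑ a ∈ Icc (B+1) (C'+1),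
      (F1 j a + F2 (j-1) a + F3 j (a-1)) = 0 := by
    refine Finset.sum_eq_zero fun j hj => Finset.sum_eq_zero fun a ha => ?_
    rw [Finset.mem_Icc] at hj ha
    exact hE j a hj.1 hj.2 ha.1 ha.2
  have A1' : (∑ j ∈ Icc K (L'+1), ∑ a ∈ Icc B (C'+1), F1 j a)
      + (∑ j ∈ Icc K (L'+1), ∑ a ∈ Icc B (C'+1), F2 j a)
      + (∑ j ∈ Icc K (L'+1), ∑ a ∈ Icc B (C'+1), F3 j a) = 0 := by
    rw [← Finset.sum_add_distrib, ← Finset.sum_add_distrib]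
    rw [← A1]
    refine Finset.sum_congr rfl fun j _ => ?_
    rw [← Finset.sum_add_distrib, ← Finset.sum_add_distrib]
  have A2' : c1 + c2 + c3 = 0 := by
    rw [hc1, hc2, hc3, ← Finset.sum_add_distrib, ← Finset.sum_add_distrib, ← A2]
    refine Finset.sum_congr rfl fun j _ => ?_
    rw [← Finset.sum_add_distrib, ← Finset.sum_add_distrib]
  have E1 : (∑ j ∈ Icc K (L'+1), ∑ a ∈ Icc B (C'+1), F1 j a) = a1 + (b1 + c1) := by
    rw [sum_bot' (fun j => ∑ a ∈ Icc B (C'+1), F1 j a) (by omega : K ≤ L'+1), ha1]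
    congr 1
    rw [hb1, hc1, ← Finset.sum_add_distrib]
    refine Finset.sum_congr rfl fun j _ => ?_
    exact sum_bot' (fun a => F1 j a) (by omega)
  have E2 : (∑ j ∈ Icc K (L'+1), ∑ a ∈ Icc B (C'+1), F2 j a) = a2 + (b2 + c2) := by
    rw [Finset.sum_Icc_succ_top (by omega : K ≤ L'+1) (fun j => ∑ a ∈ Icc B (C'+1), F2 j a),
      ha2, hb2, hc2]
    rw [← sum_pred' (fun j => ∑ a ∈ Icc B (C'+1), F2 j a) K L'] at *
    rw [← Finset.sum_add_distrib]
    rw [add_comm _ a2]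
    congr 1
    refine Finset.sum_congr rfl fun j _ => ?_
    exact sum_bot' (fun a => F2 (j-1) a) (by omega)
  have E3 : (∑ j ∈ Icc K (L'+1), ∑ a ∈ Icc B (C'+1), F3 j a) = a3 + (b3 + c3) := by
    rw [sum_bot' (fun j => ∑ a ∈ Icc B (C'+1), F3 j a) (by omega : K ≤ L'+1), ha3]
    congr 1
    rw [hb3, hc3, ← Finset.sum_add_distrib]
    refine Finset.sum_congr rfl fun j _ => ?_
    rw [Finset.sum_Icc_succ_top (by omega : B ≤ C'+1) (fun a => F3 j a),
      sum_pred' (fun a => F3 j a) B C']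
    ring
  rw [g1, g2]
  rw [E1, E2, E3] at A1'
  linarith [A1', A2', e1, e2, e3]

/-- Global discrete covariant Noether theorem: if the density `𝓛_d` is
`G`-invariant and `φ_d` satisfies the discrete covariant Euler-Lagrange
equations, then for every rectangular subdomain the global Noether quantity
`𝒥_{B,C}^{K,L}(φ_d)` vanishes in `𝔤*`. -/
theorem global_discrete_covariant_Noether
    (N A : ℕ)
    (Lag : ℕ → ℕ → V × V × V → ℝ) (hLag : ∀ j a, ContDiff ℝ (⊤ : ℕ∞) (Lag j a))
    (Φ : ℝ → 𝔤 → V → V) (ξM : 𝔤 → V → V)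
    (hΦ0 : ∀ (ξ : 𝔤) (q : V), Φ 0 ξ q = q)
    (hgen : ∀ (ξ : 𝔤) (q : V), HasDerivAt (fun t => Φ t ξ q) (ξM ξ q) 0)
    (hinv : ∀ (j a : ℕ) (t : ℝ) (ξ : 𝔤) (p1 p2 p3 : V),
      Lag j a (Φ t ξ p1, Φ t ξ p2, Φ t ξ p3) = Lag j a (p1, p2, p3))
    (φ : ℕ → ℕ → V) :
    -- first jet of the field on the triangle `Δ_a^j`
    let tri : ℕ → ℕ → V × V × V := fun j a => (φ j a, φ (j + 1) a, φ j (a + 1))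
    -- the three discrete covariant momentum maps, paired with `ξ`
    let J1 : ℕ → ℕ → 𝔤 → ℝ := fun j a ξ => (T1 (Lag j a) (tri j a)) (ξM ξ (φ j a))
    let J2 : ℕ → ℕ → 𝔤 → ℝ := fun j a ξ => (T2 (Lag j a) (tri j a)) (ξM ξ (φ (j + 1) a))
    let J3 : ℕ → ℕ → 𝔤 → ℝ := fun j a ξ => (T3 (Lag j a) (tri j a)) (ξM ξ (φ j (a + 1)))
    -- discrete covariant Euler-Lagrange equations
    (∀ j a, 1 ≤ j → j ≤ N - 1 → 1 ≤ a → a ≤ A - 1 →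
      T1 (Lag j a) (tri j a) + T2 (Lag (j - 1) a) (tri (j - 1) a) +
        T3 (Lag j (a - 1)) (tri j (a - 1)) = 0) →
    ∀ (B C K L : ℕ), B < C → C ≤ A - 1 → K < L → L ≤ N - 1 → ∀ ξ : 𝔤,
      (∑ j ∈ Finset.Icc (K + 1) L, (J1 j B ξ + J2 (j - 1) B ξ + J3 j C ξ)) +
      (∑ a ∈ Finset.Icc (B + 1) C, (J1 K a ξ + J2 L a ξ + J3 K (a - 1) ξ)) +
      (J1 K B ξ + J2 L B ξ + J3 K C ξ) = 0 := by
  intro tri J1 J2 J3 hDEL B C K L hBC hC hKL hL ξ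
  have hP : ∀ j a, J1 j a ξ + J2 j a ξ + J3 j a ξ = 0 := by
    intro j a
    exact noether_pointwise (Lag j a) (hLag j a) Φ ξM hΦ0 hgen
      (fun t ξ' p1 p2 p3 => hinv j a t ξ' p1 p2 p3) ξ (φ j a) (φ (j+1) a) (φ j (a+1))
  have hE : ∀ j a, K+1 ≤ j → j ≤ L → B+1 ≤ a → a ≤ C →
      J1 j a ξ + J2 (j-1) a ξ + J3 j (a-1) ξ = 0 := by
    intro j a h1 h2 h3 h4
    have h := hDEL j a (by omega) (by omega) (by omega) (by omega)
    have h' := congrArg (fun T : V →L[ℝ] ℝ => T (ξM ξ (φ j a))) h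
    simp only [ContinuousLinearMap.add_apply, ContinuousLinearMap.zero_apply] at h'
    have hj1 : j - 1 + 1 = j := by omega
    have ha1 : a - 1 + 1 = a := by omega
    show T1 (Lag j a) (tri j a) (ξM ξ (φ j a))
      + T2 (Lag (j-1) a) (tri (j-1) a) (ξM ξ (φ (j-1+1) a))
      + T3 (Lag j (a-1)) (tri j (a-1)) (ξM ξ (φ j (a-1+1))) = 0
    rw [hj1, ha1]
    exact h'
  exact combinatorial (fun j a => J1 j a ξ) (fun j a => J2 j a ξ) (fun j a => J3 j a ξ)
    B C K L hBC hKL hP hE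

end
end

section
/- Let G be a matrix Lie group, τ : 𝔤 → G a local diffeomorphism with τ(0) = e, and let g : {0,...,N} → G be a discrete curve with ξ^j := τ^{-1}((g^j)^{-1} g^{j+1})/Δt. If g^j_ε is a smooth variation of g^j and ζ^j := (g^j)^{-1} δg^j, then the induced variation of ξ^j is δξ^j = (1/Δt) d^Rτ^{-1}_{Δt ξ^j}( -ζ^j + Ad_{τ(Δt ξ^j)} ζ^{j+1} ). -/
open scoped Topology

noncomputable section

variable {A : Type*} [NormedRing A] [NormedAlgebra ℝ A] [CompleteSpace A]

/-- Right trivialized derivative of the (local) inverse of `τ`: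
`d^Rτ⁻¹_ξ(η) = T_{τ(ξ)}τ⁻¹(η τ(ξ))`. -/
def dRtauInv (τ τinv : A → A) (ξ η : A) : A :=
  fderiv ℝ τinv (τ ξ) (η * τ ξ)

/-- Variation formula for the discrete convective velocity
`ξ^j = τ⁻¹((g^j)⁻¹ g^{j+1})/Δt` of a discrete curve in a matrix Lie group:
if `ζ^j = (g^j)⁻¹ δg^j`, then
`δξ^j = (1/Δt) d^Rτ⁻¹_{Δt ξ^j}(-ζ^j + Ad_{τ(Δt ξ^j)} ζ^{j+1})`. -/
theorem discrete_velocity_variation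
    (τ τinv : A → A) (hτ : ContDiff ℝ (⊤ : ℕ∞) τ) (hτinv : ContDiff ℝ (⊤ : ℕ∞) τinv)
    (hτ0 : τ 0 = 1)
    (Δt : ℝ) (hΔt : 0 < Δt)
    (N : ℕ) (g : ℝ → ℕ → A) (j : ℕ) (hj : j + 1 ≤ N)
    (hgu : ∀ (ε : ℝ) (k : ℕ), IsUnit (g ε k))
    (hgsm : ∀ k : ℕ, ContDiff ℝ (⊤ : ℕ∞) (fun ε => g ε k))
    (δg : ℕ → A)
    (hδ : ∀ k : ℕ, HasDerivAt (fun ε => g ε k) (δg k) 0)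
    (hloc : ∀ᶠ x in 𝓝 (Ring.inverse (g 0 j) * g 0 (j + 1)), τ (τinv x) = x)
    (hloc' : ∀ᶠ y in 𝓝 (τinv (Ring.inverse (g 0 j) * g 0 (j + 1))), τinv (τ y) = y) :
    -- `ξ^j` at `ε = 0` and the trivialized variations `ζ^k = (g^k)⁻¹ δg^k`
    let ξ0 : A := Δt⁻¹ • τinv (Ring.inverse (g 0 j) * g 0 (j + 1))
    let ζ : ℕ → A := fun k => Ring.inverse (g 0 k) * δg k
    HasDerivAt (fun ε => Δt⁻¹ • τinv (Ring.inverse (g ε j) * g ε (j + 1)))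
      (Δt⁻¹ • dRtauInv τ τinv (Δt • ξ0)
        (-ζ j + τ (Δt • ξ0) * ζ (j + 1) * Ring.inverse (τ (Δt • ξ0)))) 0 := by
  intro ξ0 ζ
  set u : Aˣ := (hgu 0 j).unit with hu
  set v : Aˣ := (hgu 0 (j + 1)).unit with hv
  have hue : (u : A) = g 0 j := (hgu 0 j).unit_spec
  have hve : (v : A) = g 0 (j + 1) := (hgu 0 (j + 1)).unit_spec
  set h0 : A := Ring.inverse (g 0 j) * g 0 (j + 1) with hh0
  -- Δt • ξ0 = τinv h0
  have hsm : Δt • ξ0 = τinv h0 := by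
    simp only [ξ0, smul_smul, mul_inv_cancel₀ hΔt.ne', one_smul]; rfl
  have hτeq : τ (Δt • ξ0) = h0 := by rw [hsm]; exact hloc.self_of_nhds
  -- h0 is a unit
  have hh0u : IsUnit h0 := by
    rw [hh0]
    exact ((isUnit_ringInverse).mpr (hgu 0 j)).mul (hgu 0 (j + 1))
  -- derivative of Ring.inverse (g ε j)
  have hr : HasFDerivAt Ring.inverse
      (-(ContinuousLinearMap.mulLeftRight ℝ A ((u⁻¹ : Aˣ) : A)) ((u⁻¹ : Aˣ) : A)) (g 0 j) :=
    hue ▸ hasFDerivAt_ringInverse (𝕜 := ℝ) u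
  have hinv : HasDerivAt (fun ε => Ring.inverse (g ε j))
      (-((u⁻¹ : Aˣ) * δg j * (u⁻¹ : Aˣ))) 0 := by
    exact hr.comp_hasDerivAt 0 (hδ j)
  -- derivative of h ε = Ring.inverse (g ε j) * g ε (j+1)
  have hmul : HasDerivAt (fun ε => Ring.inverse (g ε j) * g ε (j + 1))
      (-((u⁻¹ : Aˣ) * δg j * (u⁻¹ : Aˣ)) * g 0 (j + 1)
        + Ring.inverse (g 0 j) * δg (j + 1)) 0 :=
    hinv.mul (hδ (j + 1))
  -- derivative of τinv ∘ h
  have hτinvd : HasFDerivAt τinv (fderiv ℝ τinv h0) h0 :=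
    (hτinv.differentiable (by simp) h0).hasFDerivAt
  have hcomp := hτinvd.comp_hasDerivAt 0 hmul
  have hfinal := hcomp.const_smul Δt⁻¹
  convert hfinal using 2
  · rfl
  · rfl
  rw [dRtauInv, hτeq]
  congr 1
  have h1 : Ring.inverse (g 0 j) = ((u⁻¹ : Aˣ) : A) := by
    rw [← hue, Ring.inverse_unit]
  have h2 : Ring.inverse h0 * h0 = 1 := Ring.inverse_mul_cancel _ hh0u
  have h3 : g 0 (j + 1) * Ring.inverse (g 0 (j + 1)) = 1 :=
    Ring.mul_inverse_cancel _ (hgu 0 (j + 1))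
  rw [hh0, h1] at h2
  simp only [ζ, hτeq, add_mul, neg_mul, h1, hh0]
  congr 1
  · simp [mul_assoc]
  · set a : A := ((u⁻¹ : Aˣ) : A)
    set b : A := g 0 (j + 1)
    set bi : A := Ring.inverse (g 0 (j + 1))
    set c : A := Ring.inverse (a * b)
    set d : A := δg (j + 1)
    calc a * b * (bi * d) * c * (a * b)
        = a * (b * bi) * (d * (c * (a * b))) := by simp only [mul_assoc]
      _ = a * d := by rw [h3, h2, mul_one, mul_one]
end
end

section
/- For the space-evolution discrete Lagrangian N_d(𝛗_a, 𝛗_{a+1}) = Σ_{j=0}^{N-1} 𝓛_d(Δ_a^j, φ_a^j, φ_a^{j+1}, φ_{a+1}^j) on V^{N+1} × V^{N+1}, its discrete Cartan one-forms satisfy: Θ⁻_{N_d} = -Σ_{j=0}^{N-1} (Θ¹_{𝓛_d}(Δ_a^j) + Θ²_{𝓛_d}(Δ_a^j)) and Θ⁺_{N_d} = Σ_{j=0}^{N-1} Θ³_{𝓛_d}(Δ_a^j), and consequently the discrete symplectic two-form satisfies Ω_{N_d} = Σ_{j=0}^{N-1} Ω³_{𝓛_d}(Δ_a^j) = -Σ_{j=0}^{N-1}(Ω¹_{𝓛_d}(Δ_a^j)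 + Ω²_{𝓛_d}(Δ_a^j)). -/
noncomputable section

variable {V : Type*} [NormedAddCommGroup V] [NormedSpace ℝ V]

/-- Evaluation of a `Pi`-valued vector at an index, as a continuous linear map. -/
def projT {N : ℕ} (i : Fin (N + 1)) : (Fin (N + 1) → V) →L[ℝ] V :=
  ContinuousLinearMap.proj i

section Aux

variable {E F : Type*} [NormedAddCommGroup E] [NormedSpace ℝ E]
  [NormedAddCommGroup F] [NormedSpace ℝ F]

lemma pD1_eq (L : E × F → ℝ) (p : E × F) (h : DifferentiableAt ℝ L p) :
    pD1 L p = (fderiv ℝ L p).comp (ContinuousLinearMap.inl ℝ E F) := by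
  have h1 : HasFDerivAt (fun x : E => (x, p.2)) (ContinuousLinearMap.inl ℝ E F) p.1 :=
    hasFDerivAt_prodMk_left p.1 p.2
  have h2 : pD1 L p = fderiv ℝ (L ∘ fun x : E => (x, p.2)) p.1 := rfl
  rw [h2, fderiv_comp p.1 h h1.differentiableAt, h1.fderiv]

lemma pD2_eq (L : E × F → ℝ) (p : E × F) (h : DifferentiableAt ℝ L p) :
    pD2 L p = (fderiv ℝ L p).comp (ContinuousLinearMap.inr ℝ E F) := by
  have h1 : HasFDerivAt (fun y : F => (p.1, y)) (ContinuousLinearMap.inr ℝ E F) p.2 :=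
    hasFDerivAt_prodMk_right p.1 p.2
  have h2 : pD2 L p = fderiv ℝ (L ∘ fun y : F => (p.1, y)) p.2 := rfl
  rw [h2, fderiv_comp p.2 h h1.differentiableAt, h1.fderiv]

lemma fderiv2_eval (L : E × F → ℝ) (p : E × F) (h : DifferentiableAt ℝ L p) (u : E) (v : F) :
    fderiv ℝ L p (u, v) = pD1 L p u + pD2 L p v := by
  rw [pD1_eq L p h, pD2_eq L p h]
  simp only [ContinuousLinearMap.comp_apply, ContinuousLinearMap.inl_apply,
    ContinuousLinearMap.inr_apply, ← map_add]
  norm_num [Prod.mk_add_mk]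

end Aux

section TAux

lemma T1_eq_s18 (L : V × V × V → ℝ) (p : V × V × V) (h : DifferentiableAt ℝ L p) :
    T1 L p = (fderiv ℝ L p).comp (ContinuousLinearMap.inl ℝ V (V × V)) :=
  pD1_eq L p h

lemma diff_slice (L : V × V × V → ℝ) (p : V × V × V) (h : DifferentiableAt ℝ L p) :
    DifferentiableAt ℝ (fun q : V × V => L (p.1, q)) p.2 :=
  h.comp p.2 (hasFDerivAt_prodMk_right p.1 p.2).differentiableAt

lemma T2_eq_s18 (L : V × V × V → ℝ) (p : V × V × V) (h : DifferentiableAt ℝ L p) :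
    T2 L p = (fderiv ℝ L p).comp
      ((ContinuousLinearMap.inr ℝ V (V × V)).comp (ContinuousLinearMap.inl ℝ V V)) := by
  have e1 : T2 L p = pD1 (fun q : V × V => L (p.1, q)) p.2 := rfl
  have e2 : fderiv ℝ (fun q : V × V => L (p.1, q)) p.2 =
      (fderiv ℝ L p).comp (ContinuousLinearMap.inr ℝ V (V × V)) := pD2_eq L p h
  rw [e1, pD1_eq _ _ (diff_slice L p h), e2, ContinuousLinearMap.comp_assoc]

lemma T3_eq_s18 (L : V × V × V → ℝ) (p : V × V × V) (h : DifferentiableAt ℝ L p) :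
    T3 L p = (fderiv ℝ L p).comp
      ((ContinuousLinearMap.inr ℝ V (V × V)).comp (ContinuousLinearMap.inr ℝ V V)) := by
  have e1 : T3 L p = pD2 (fun q : V × V => L (p.1, q)) p.2 := rfl
  have e2 : fderiv ℝ (fun q : V × V => L (p.1, q)) p.2 =
      (fderiv ℝ L p).comp (ContinuousLinearMap.inr ℝ V (V × V)) := pD2_eq L p h
  rw [e1, pD2_eq _ _ (diff_slice L p h), e2, ContinuousLinearMap.comp_assoc]

lemma fderiv3_eval (L : V × V × V → ℝ) (p : V × V × V) (h : DifferentiableAt ℝ L p)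
    (u v w : V) :
    fderiv ℝ L p (u, v, w) = T1 L p u + T2 L p v + T3 L p w := by
  rw [T1_eq_s18 L p h, T2_eq_s18 L p h, T3_eq_s18 L p h]
  simp only [ContinuousLinearMap.comp_apply, ContinuousLinearMap.inl_apply,
    ContinuousLinearMap.inr_apply, ← map_add]
  norm_num [Prod.mk_add_mk]

end TAux

set_option maxHeartbeats 1000000

/-- Cartan one-forms and symplectic two-form of the space-evolution Lagrangian
`N_d(𝛗_a,𝛗_{a+1}) = Σ_j 𝓛_a^j`:
`Θ⁻_{N_d} = -Σ_j (Θ¹ + Θ²)`, `Θ⁺_{N_d} = Σ_j Θ³`, and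
`Ω_{N_d} = Σ_j Ω³ = -Σ_j (Ω¹ + Ω²)`. -/
theorem space_evolution_Cartan_forms
    (N : ℕ) (a : ℕ)
    (Lag : ℕ → ℕ → V × V × V → ℝ) (hLag : ∀ j a, ContDiff ℝ (⊤ : ℕ∞) (Lag j a)) :
    let W := (Fin (N + 1) → V) × (Fin (N + 1) → V)
    let Nd : W → ℝ := fun p =>
      ∑ j : Fin N, Lag j.1 a (p.1 j.castSucc, p.1 j.succ, p.2 j.castSucc)
    let triw : W → Fin N → V × V × V := fun w j =>
      (w.1 j.castSucc, w.1 j.succ, w.2 j.castSucc)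
    -- the pulled back covariant Cartan one-forms
    let θ1 : Fin N → W → (W →L[ℝ] ℝ) := fun j w =>
      (T1 (Lag j.1 a) (triw w j)).comp
        ((projT j.castSucc).comp (ContinuousLinearMap.fst ℝ (Fin (N + 1) → V) (Fin (N + 1) → V)))
    let θ2 : Fin N → W → (W →L[ℝ] ℝ) := fun j w =>
      (T2 (Lag j.1 a) (triw w j)).comp
        ((projT j.succ).comp (ContinuousLinearMap.fst ℝ (Fin (N + 1) → V) (Fin (N + 1) → V)))
    let θ3 : Fin N → W → (W →L[ℝ] ℝ) := fun j w =>
      (T3 (Lag j.1 a) (triw w j)).comp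
        ((projT j.castSucc).comp (ContinuousLinearMap.snd ℝ (Fin (N + 1) → V) (Fin (N + 1) → V)))
    -- the Cartan one-forms of `N_d`
    let ΘM : W → (W →L[ℝ] ℝ) := fun w =>
      -((pD1 Nd w).comp (ContinuousLinearMap.fst ℝ (Fin (N + 1) → V) (Fin (N + 1) → V)))
    let ΘP : W → (W →L[ℝ] ℝ) := fun w =>
      (pD2 Nd w).comp (ContinuousLinearMap.snd ℝ (Fin (N + 1) → V) (Fin (N + 1) → V))
    -- exterior derivative of a one-form
    let tf : (W → (W →L[ℝ] ℝ)) → W → W → W → ℝ := fun α w u v =>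
      fderiv ℝ α w u v - fderiv ℝ α w v u
    (∀ w : W, ΘM w = -(∑ j : Fin N, (θ1 j w + θ2 j w))) ∧
    (∀ w : W, ΘP w = ∑ j : Fin N, θ3 j w) ∧
    (∀ w u v : W, -(tf ΘM w u v) = ∑ j : Fin N, -(tf (θ3 j) w u v)) ∧
    (∀ w u v : W, -(tf ΘM w u v) =
      -(∑ j : Fin N, ((-(tf (θ1 j) w u v)) + (-(tf (θ2 j) w u v))))) := by
  intro W Nd triw θ1 θ2 θ3 ΘM ΘP tf
  let F1 := ContinuousLinearMap.fst ℝ (Fin (N + 1) → V) (Fin (N + 1) → V)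
  let F2 := ContinuousLinearMap.snd ℝ (Fin (N + 1) → V) (Fin (N + 1) → V)
  let ℓ : Fin N → W →L[ℝ] V × V × V := fun j =>
    ((projT j.castSucc).comp F1).prod
      (((projT j.succ).comp F1).prod ((projT j.castSucc).comp F2))
  have hLd : ∀ j : ℕ, Differentiable ℝ (Lag j a) := fun j => (hLag j a).differentiable (by simp)
  have hNdC : ContDiff ℝ (⊤ : ℕ∞) Nd :=
    ContDiff.sum fun j _ => (hLag j.1 a).comp (ℓ j).contDiff
  have hNdiff : Differentiable ℝ Nd := hNdC.differentiable (by simp)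
  have h2nd : Differentiable ℝ (fderiv ℝ Nd) :=
    (hNdC.fderiv_right (m := (⊤ : ℕ∞)) (by simp)).differentiable (by simp)
  have hdNd : ∀ w : W, fderiv ℝ Nd w
      = ∑ j : Fin N, (fderiv ℝ (Lag j.1 a) (ℓ j w)).comp (ℓ j) := by
    intro w
    have e : fderiv ℝ Nd w = fderiv ℝ (fun p : W => ∑ j : Fin N, (Lag j.1 a ∘ (ℓ j)) p) w := rfl
    rw [e, fderiv_fun_sum fun j _ => ((hLd j.1).differentiableAt).comp w (ℓ j).differentiableAt]
    exact Finset.sum_congr rfl fun j _ => by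
      rw [fderiv_comp w (hLd j.1).differentiableAt (ℓ j).differentiableAt,
        ContinuousLinearMap.fderiv]
  -- Part 1
  have h1 : ∀ w : W, ΘM w = -(∑ j : Fin N, (θ1 j w + θ2 j w)) := by
    intro w
    have hpD1 : pD1 Nd w = (fderiv ℝ Nd w).comp (ContinuousLinearMap.inl ℝ _ _) :=
      pD1_eq Nd w (hNdiff w)
    refine ContinuousLinearMap.ext fun u => ?_
    simp only [ΘM, θ1, θ2, ContinuousLinearMap.neg_apply, ContinuousLinearMap.comp_apply,
      ContinuousLinearMap.sum_apply, ContinuousLinearMap.add_apply, hpD1,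
      ContinuousLinearMap.inl_apply, ContinuousLinearMap.coe_fst']
    rw [hdNd w]
    simp only [ContinuousLinearMap.sum_apply, ContinuousLinearMap.comp_apply]
    refine congrArg Neg.neg (Finset.sum_congr rfl fun j _ => ?_)
    show fderiv ℝ (Lag j.1 a) ((ℓ j) w)
      ((u.1 j.castSucc, u.1 j.succ, (0 : V)) : V × V × V) = _
    rw [fderiv3_eval _ _ ((hLd j.1) (ℓ j w)) _ _ _, map_zero, add_zero]
    rfl
  -- Part 2
  have h2 : ∀ w : W, ΘP w = ∑ j : Fin N, θ3 j w := by
    intro w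
    have hpD2 : pD2 Nd w = (fderiv ℝ Nd w).comp (ContinuousLinearMap.inr ℝ _ _) :=
      pD2_eq Nd w (hNdiff w)
    refine ContinuousLinearMap.ext fun u => ?_
    simp only [ΘP, θ3, ContinuousLinearMap.comp_apply, ContinuousLinearMap.sum_apply, hpD2,
      ContinuousLinearMap.inr_apply, ContinuousLinearMap.coe_snd']
    rw [hdNd w]
    simp only [ContinuousLinearMap.sum_apply, ContinuousLinearMap.comp_apply]
    refine Finset.sum_congr rfl fun j _ => ?_
    show fderiv ℝ (Lag j.1 a) ((ℓ j) w)
      (((0 : V), (0 : V), u.2 j.castSucc) : V × V × V) = _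
    rw [fderiv3_eval _ _ ((hLd j.1) (ℓ j w)) _ _ _, map_zero, map_zero, zero_add, zero_add]
    rfl
  -- differentiability of the pulled-back one-forms
  have hΦdiff : ∀ (m : W →L[ℝ] V × V × V) (j : Fin N),
      Differentiable ℝ (fun w : W => (fderiv ℝ (Lag j.1 a) (ℓ j w)).comp m) := by
    intro m j
    have hfd : Differentiable ℝ (fderiv ℝ (Lag j.1 a)) :=
      ((hLag j.1 a).fderiv_right (m := (⊤ : ℕ∞)) (by simp)).differentiable (by simp)
    exact ((ContinuousLinearMap.compL ℝ W (V × V × V) ℝ).flip m).differentiable.comp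
      (hfd.comp (ℓ j).differentiable)
  have hθ1eq : ∀ j : Fin N, θ1 j = fun w : W =>
      (fderiv ℝ (Lag j.1 a) (ℓ j w)).comp
        ((ContinuousLinearMap.inl ℝ V (V × V)).comp ((projT j.castSucc).comp F1)) := by
    intro j; funext w
    simp only [θ1]
    rw [show triw w j = ℓ j w from rfl, T1_eq_s18 _ _ ((hLd j.1) (ℓ j w))]
    rfl
  have hθ2eq : ∀ j : Fin N, θ2 j = fun w : W =>
      (fderiv ℝ (Lag j.1 a) (ℓ j w)).comp
        (((ContinuousLinearMap.inr ℝ V (V × V)).comp (ContinuousLinearMap.inl ℝ V V)).comp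
          ((projT j.succ).comp F1)) := by
    intro j; funext w
    simp only [θ2]
    rw [show triw w j = ℓ j w from rfl, T2_eq_s18 _ _ ((hLd j.1) (ℓ j w))]
    rfl
  have hθ3eq : ∀ j : Fin N, θ3 j = fun w : W =>
      (fderiv ℝ (Lag j.1 a) (ℓ j w)).comp
        (((ContinuousLinearMap.inr ℝ V (V × V)).comp (ContinuousLinearMap.inr ℝ V V)).comp
          ((projT j.castSucc).comp F2)) := by
    intro j; funext w
    simp only [θ3]
    rw [show triw w j = ℓ j w from rfl, T3_eq_s18 _ _ ((hLd j.1) (ℓ j w))]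
    rfl
  have hθ1diff : ∀ j : Fin N, Differentiable ℝ (θ1 j) := fun j => by
    rw [hθ1eq j]; exact hΦdiff _ j
  have hθ2diff : ∀ j : Fin N, Differentiable ℝ (θ2 j) := fun j => by
    rw [hθ2eq j]; exact hΦdiff _ j
  have hθ3diff : ∀ j : Fin N, Differentiable ℝ (θ3 j) := fun j => by
    rw [hθ3eq j]; exact hΦdiff _ j
  -- ΘM and ΘP as functions of the full derivative
  have hΘMeq : ΘM = fun w : W =>
      -((fderiv ℝ Nd w).comp ((ContinuousLinearMap.inl ℝ _ _).comp F1)) := by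
    funext w
    simp only [ΘM]
    rw [pD1_eq Nd w (hNdiff w)]
    rfl
  have hΘMdiff : Differentiable ℝ ΘM := by
    rw [hΘMeq]
    exact (((ContinuousLinearMap.compL ℝ W W ℝ).flip
      ((ContinuousLinearMap.inl ℝ _ _).comp F1)).differentiable.comp h2nd).neg
  have hΘP_sum : ΘP = fun w : W => ΘM w + fderiv ℝ Nd w := by
    funext w
    refine ContinuousLinearMap.ext fun u => ?_
    have e := fderiv2_eval Nd w (hNdiff w) u.1 u.2
    simp only [Prod.mk.eta] at e
    have e1 : (ContinuousLinearMap.fst ℝ (Fin (N + 1) → V) (Fin (N + 1) → V)) u = u.1 := rfl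
    have e2 : (ContinuousLinearMap.snd ℝ (Fin (N + 1) → V) (Fin (N + 1) → V)) u = u.2 := rfl
    simp only [ΘP, ΘM, ContinuousLinearMap.add_apply, ContinuousLinearMap.neg_apply,
      ContinuousLinearMap.comp_apply, e1, e2, e]
    ring
  have hΘPdiff : Differentiable ℝ ΘP := by
    rw [hΘP_sum]; exact hΘMdiff.add h2nd
  -- Part 4
  have h4 : ∀ w u v : W, -(tf ΘM w u v) =
      -(∑ j : Fin N, ((-(tf (θ1 j) w u v)) + (-(tf (θ2 j) w u v)))) := by
    intro w u v
    have hM : ΘM = fun w => -(∑ j : Fin N, (θ1 j w + θ2 j w)) := funext h1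
    have hdM : fderiv ℝ ΘM w
        = -(∑ j : Fin N, (fderiv ℝ (θ1 j) w + fderiv ℝ (θ2 j) w)) := by
      calc fderiv ℝ ΘM w
          = fderiv ℝ (fun w => -(∑ j : Fin N, (θ1 j w + θ2 j w))) w := by rw [hM]
        _ = -(fderiv ℝ (fun w => ∑ j : Fin N, (θ1 j w + θ2 j w)) w) := fderiv_neg
        _ = -(∑ j : Fin N, fderiv ℝ (fun w => θ1 j w + θ2 j w) w) := by
              rw [fderiv_fun_sum (A := fun j w => θ1 j w + θ2 j w) fun j _ => ((hθ1diff j w).add (hθ2diff j w))]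
        _ = -(∑ j : Fin N, (fderiv ℝ (θ1 j) w + fderiv ℝ (θ2 j) w)) := by
              exact congrArg Neg.neg (Finset.sum_congr rfl fun j _ =>
                fderiv_add (hθ1diff j w) (hθ2diff j w))
    simp only [tf, hdM, ContinuousLinearMap.neg_apply, ContinuousLinearMap.sum_apply,
      ContinuousLinearMap.add_apply]
    rw [Finset.sum_add_distrib, Finset.sum_add_distrib]
    simp only [neg_sub, neg_add_rev, neg_neg, Finset.sum_add_distrib, Finset.sum_sub_distrib]
    ring
  -- Part 3
  have hsymm : ∀ w u v : W, fderiv ℝ (fderiv ℝ Nd) w u v = fderiv ℝ (fderiv ℝ Nd) w v u := by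
    intro w u v
    exact second_derivative_symmetric (fun y => (hNdiff y).hasFDerivAt)
      ((h2nd w).hasFDerivAt) u v
  have h3 : ∀ w u v : W, -(tf ΘM w u v) = ∑ j : Fin N, -(tf (θ3 j) w u v) := by
    intro w u v
    have hdP : fderiv ℝ ΘP w = fderiv ℝ ΘM w + fderiv ℝ (fderiv ℝ Nd) w := by
      conv_lhs => rw [hΘP_sum]
      exact fderiv_add (hΘMdiff w) (h2nd w)
    have hdP2 : fderiv ℝ ΘP w = ∑ j : Fin N, fderiv ℝ (θ3 j) w := by
      have hP : ΘP = fun w => ∑ j : Fin N, θ3 j w := funext h2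
      rw [hP, fderiv_fun_sum fun j _ => (hθ3diff j w)]
    have hM : fderiv ℝ ΘM w = (∑ j : Fin N, fderiv ℝ (θ3 j) w) - fderiv ℝ (fderiv ℝ Nd) w := by
      rw [← hdP2, hdP]; abel
    simp only [tf, hM, ContinuousLinearMap.sub_apply, ContinuousLinearMap.sum_apply]
    rw [hsymm w u v]
    simp only [neg_sub, Finset.sum_sub_distrib]
    ring
  exact ⟨h1, h2, h3, h4⟩

end
end
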